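/- arXiv:2211.11648 — 3 statements merged into one kernel-verified Lean document; each statement's English description precedes it below -/
import Mathlib

section
/- For non-negative integers k, j with j ≤ k and non-negative integer r, the two expressions Σ_{i=0}^{k-j} C(k,i) · S(k-i, j) · r^i and (1/j!) · Σ_{i=0}^{j} (-1)^{j-i} · C(j,i) · (i+r)^k are equal, i.e., the r-Stirling number {k,j}_r admits both representations. -/
open Finset

/-- Stirling numbers of the second kind. -/
def st : ℕ → ℕ → ℕ
  | 0, 0 => 1
  | 0, _ + 1 => 0
  | _ + 1, 0 => 0
  | k + 1, j + 1 => (j + 1) * st k (j + 1) + st k j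

/-- Power sum `S_k(n) = 1^k + 2^k + ⋯ + n^k` as a rational. -/
def S (k n : ℕ) : ℚ := ∑ i ∈ range n, ((i : ℚ) + 1) ^ k

/-- The `r`-Stirling number of the second kind `{k, j}_r` (rational form). -/
def rSt (k j : ℕ) (r : ℚ) : ℚ :=
  (1 / (j.factorial : ℚ)) * ∑ i ∈ range (j + 1),
    (-1 : ℚ) ^ (j - i) * (j.choose i : ℚ) * ((i : ℚ) + r) ^ k

/-- The dual (non-central) Stirling number `{k, j}_{-r}`. -/
def nSt (k j r : ℕ) : ℚ :=
  (1 / (j.factorial : ℚ)) * ∑ i ∈ range (j + 1),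
    (-1 : ℚ) ^ (j - i) * (j.choose i : ℚ) * ((i : ℚ) - r) ^ k

/-- Generalized (falling-factorial) binomial coefficient `C(x, m)`. -/
def gch (x : ℚ) (m : ℕ) : ℚ := (∏ i ∈ range m, (x - i)) / (m.factorial : ℚ)

lemma st_eq_zero : ∀ {n j : ℕ}, n < j → st n j = 0
  | 0, _ + 1, _ => rfl
  | n + 1, j + 1, h => by
    have h1 : n < j + 1 := by omega
    have h2 : n < j := by omega
    simp [st, st_eq_zero h1, st_eq_zero h2]

lemma key (n j : ℕ) :
    ∑ i ∈ range (j + 2), (-1 : ℚ) ^ (j + 1 - i) * ((j + 1).choose i : ℚ) * (i : ℚ) ^ n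
      = (∑ t ∈ range (j + 1), (-1 : ℚ) ^ (j - t) * (j.choose t : ℚ) * ((t : ℚ) + 1) ^ n)
        - ∑ i ∈ range (j + 1), (-1 : ℚ) ^ (j - i) * (j.choose i : ℚ) * (i : ℚ) ^ n := by
  rw [Finset.sum_range_succ' (fun i => (-1 : ℚ) ^ (j + 1 - i) * ((j + 1).choose i : ℚ) * (i : ℚ) ^ n) (j + 1)]
  have e1 : ∀ t ∈ range (j + 1),
      (-1 : ℚ) ^ (j + 1 - (t + 1)) * (((j + 1).choose (t + 1) : ℕ) : ℚ) * ((t + 1 : ℕ) : ℚ) ^ n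
        = (-1 : ℚ) ^ (j - t) * (j.choose t : ℚ) * ((t : ℚ) + 1) ^ n
          + (-1 : ℚ) ^ (j - t) * (j.choose (t + 1) : ℚ) * ((t : ℚ) + 1) ^ n := by
    intro t ht
    rw [Nat.succ_sub_succ, Nat.choose_succ_succ]
    push_cast
    ring
  rw [Finset.sum_congr rfl e1, Finset.sum_add_distrib]
  have e2 : ∑ t ∈ range (j + 1), (-1 : ℚ) ^ (j - t) * (j.choose (t + 1) : ℚ) * ((t : ℚ) + 1) ^ n
      = -(∑ i ∈ range (j + 1), (-1 : ℚ) ^ (j - i) * (j.choose i : ℚ) * (i : ℚ) ^ n)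
        + (-1 : ℚ) ^ j * (0 : ℚ) ^ n := by
    rw [Finset.sum_range_succ' (fun i => (-1 : ℚ) ^ (j - i) * (j.choose i : ℚ) * (i : ℚ) ^ n) j]
    rw [Finset.sum_range_succ]
    have e3 : ∀ t ∈ range j,
        (-1 : ℚ) ^ (j - t) * (j.choose (t + 1) : ℚ) * ((t : ℚ) + 1) ^ n
          = -((-1 : ℚ) ^ (j - (t + 1)) * (j.choose (t + 1) : ℚ) * (((t + 1 : ℕ) : ℚ)) ^ n) := by
      intro t ht
      have ht' : t < j := mem_range.mp ht
      have : j - t = (j - (t + 1)) + 1 := by omega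
      rw [this, pow_succ]
      push_cast
      ring
    rw [Finset.sum_congr rfl e3, Finset.sum_neg_distrib]
    simp
  rw [e2]
  have : ((0 : ℕ) : ℚ) = 0 := by norm_num
  simp only [Nat.choose_zero_right, Nat.cast_zero, Nat.cast_one, Nat.sub_zero]
  rw [pow_succ]
  ring

lemma step1 (n j : ℕ) :
    ∑ i ∈ range (j + 2), (-1 : ℚ) ^ (j + 1 - i) * ((j + 1).choose i : ℚ) * (i : ℚ) ^ (n + 1)
      = (j + 1 : ℚ) * ∑ t ∈ range (j + 1), (-1 : ℚ) ^ (j - t) * (j.choose t : ℚ) * ((t : ℚ) + 1) ^ n := by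
  rw [Finset.sum_range_succ' (fun i => (-1 : ℚ) ^ (j + 1 - i) * ((j + 1).choose i : ℚ) * (i : ℚ) ^ (n + 1)) (j + 1)]
  rw [Finset.mul_sum]
  have e : ∀ t ∈ range (j + 1),
      (-1 : ℚ) ^ (j + 1 - (t + 1)) * (((j + 1).choose (t + 1) : ℕ) : ℚ) * ((t + 1 : ℕ) : ℚ) ^ (n + 1)
        = (j + 1 : ℚ) * ((-1 : ℚ) ^ (j - t) * (j.choose t : ℚ) * ((t : ℚ) + 1) ^ n) := by
    intro t ht
    rw [Nat.succ_sub_succ]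
    have hc : ((j + 1).choose (t + 1) : ℚ) * ((t : ℚ) + 1) = (j + 1 : ℚ) * (j.choose t : ℚ) := by
      have := Nat.add_one_mul_choose_eq j t
      have : ((j + 1) * j.choose t : ℕ) = ((j + 1).choose (t + 1) * (t + 1) : ℕ) := this
      have := congrArg (Nat.cast (R := ℚ)) this
      push_cast at this ⊢
      linarith
    push_cast
    calc (-1 : ℚ) ^ (j - t) * ((j + 1).choose (t + 1) : ℚ) * ((t : ℚ) + 1) ^ (n + 1)
        = (-1 : ℚ) ^ (j - t) * (((j + 1).choose (t + 1) : ℚ) * ((t : ℚ) + 1)) * ((t : ℚ) + 1) ^ n := by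
          rw [pow_succ]; ring
      _ = _ := by rw [hc]; push_cast; ring
  rw [Finset.sum_congr rfl e]
  simp

lemma lemB : ∀ (n j : ℕ),
    ∑ i ∈ range (j + 1), (-1 : ℚ) ^ (j - i) * (j.choose i : ℚ) * (i : ℚ) ^ n
      = (j.factorial : ℚ) * (st n j : ℚ) := by
  intro n
  induction n with
  | zero =>
    intro j
    have hb : ((1 : ℚ) + (-1)) ^ j = ∑ i ∈ range (j + 1), (1 : ℚ) ^ i * (-1 : ℚ) ^ (j - i) * (j.choose i : ℚ) := add_pow 1 (-1) j
    cases j with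
    | zero => simp [st]
    | succ j =>
      have h0 : ((1 : ℚ) + (-1)) ^ (j + 1) = 0 := by norm_num
      rw [h0] at hb
      have : ∑ i ∈ range (j + 1 + 1), (-1 : ℚ) ^ (j + 1 - i) * ((j + 1).choose i : ℚ) * (i : ℚ) ^ 0 = 0 := by
        rw [show ∑ i ∈ range (j + 1 + 1), (-1 : ℚ) ^ (j + 1 - i) * ((j + 1).choose i : ℚ) * (i : ℚ) ^ 0
            = ∑ i ∈ range (j + 1 + 1), (1 : ℚ) ^ i * (-1 : ℚ) ^ (j + 1 - i) * ((j + 1).choose i : ℚ) from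
          Finset.sum_congr rfl (fun i hi => by ring), ← hb]
      rw [this, st_eq_zero (by omega)]
      simp
  | succ n ih =>
    intro j
    cases j with
    | zero => simp [st]
    | succ j =>
      have h1 := step1 n j
      have h2 := key n j
      rw [ih (j + 1), ih j] at h2
      have hg : ∑ t ∈ range (j + 1), (-1 : ℚ) ^ (j - t) * (j.choose t : ℚ) * ((t : ℚ) + 1) ^ n
          = ((j + 1).factorial : ℚ) * (st n (j + 1) : ℚ) + (j.factorial : ℚ) * (st n j : ℚ) := by
        linarith
      show ∑ i ∈ range (j + 2), (-1 : ℚ) ^ (j + 1 - i) * ((j + 1).choose i : ℚ) * (i : ℚ) ^ (n + 1)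
          = ((j + 1).factorial : ℚ) * (st (n + 1) (j + 1) : ℚ)
      rw [h1, hg, show st (n + 1) (j + 1) = (j + 1) * st n (j + 1) + st n j from rfl]
      rw [Nat.factorial_succ]
      push_cast
      ring

lemma lemL (n j : ℕ) (x : ℚ) :
    ∑ i ∈ range (j + 1), (-1 : ℚ) ^ (j - i) * (j.choose i : ℚ) * ((i : ℚ) + x) ^ n
      = ∑ m ∈ range (n + 1), (n.choose m : ℚ) * ((j.factorial : ℚ) * (st (n - m) j : ℚ)) * x ^ m := by
  have e1 : ∀ i ∈ range (j + 1),
      (-1 : ℚ) ^ (j - i) * (j.choose i : ℚ) * ((i : ℚ) + x) ^ n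
        = ∑ m ∈ range (n + 1), (-1 : ℚ) ^ (j - i) * (j.choose i : ℚ) * (i : ℚ) ^ m * (x ^ (n - m) * (n.choose m : ℚ)) := by
    intro i hi
    rw [add_pow, Finset.mul_sum]
    apply Finset.sum_congr rfl
    intro m hm
    ring
  rw [Finset.sum_congr rfl e1, Finset.sum_comm]
  have e2 : ∀ m ∈ range (n + 1),
      ∑ i ∈ range (j + 1), (-1 : ℚ) ^ (j - i) * (j.choose i : ℚ) * (i : ℚ) ^ m * (x ^ (n - m) * (n.choose m : ℚ))
        = (n.choose m : ℚ) * ((j.factorial : ℚ) * (st m j : ℚ)) * x ^ (n - m) := by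
    intro m hm
    rw [← Finset.sum_mul, lemB m j]
    ring
  rw [Finset.sum_congr rfl e2]
  rw [← Finset.sum_range_reflect (fun m => (n.choose m : ℚ) * ((j.factorial : ℚ) * (st m j : ℚ)) * x ^ (n - m)) (n + 1)]
  apply Finset.sum_congr rfl
  intro m hm
  have hm' : m ≤ n := Nat.lt_succ_iff.mp (mem_range.mp hm)
  have h1 : n + 1 - 1 - m = n - m := by omega
  have h2 : n - (n - m) = m := by omega
  rw [h1, h2, Nat.choose_symm hm']

theorem stmt2 (k j r : ℕ) (h : j ≤ k) :
    (∑ i ∈ range (k - j + 1), (k.choose i : ℚ) * (st (k - i) j : ℚ) * (r : ℚ) ^ i) =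
      (1 / (j.factorial : ℚ)) * ∑ i ∈ range (j + 1),
        (-1 : ℚ) ^ (j - i) * (j.choose i : ℚ) * ((i : ℚ) + r) ^ k := by
  rw [lemL k j (r : ℚ)]
  have hf : (j.factorial : ℚ) ≠ 0 := by positivity
  rw [Finset.mul_sum]
  have e : ∀ m ∈ range (k + 1),
      (1 / (j.factorial : ℚ)) * ((k.choose m : ℚ) * ((j.factorial : ℚ) * (st (k - m) j : ℚ)) * (r : ℚ) ^ m)
        = (k.choose m : ℚ) * (st (k - m) j : ℚ) * (r : ℚ) ^ m := by
    intro m hm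
    field_simp
  rw [Finset.sum_congr rfl e]
  apply Finset.sum_subset
  · intro m hm
    simp only [mem_range] at *
    omega
  · intro m hm1 hm2
    simp only [mem_range] at *
    have : k - m < j := by omega
    rw [st_eq_zero this]
    simp
end

section
/- For any non-negative integers k and n, S_k(n) = Σ_{j=0}^{k} (-1)^j · j! · C(n+j, j+1) · {k,j}_{n+1}, where {k,j}_{n+1} = (1/j!) Σ_{i=0}^{j} (-1)^{j-i} C(j,i) (i+n+1)^k. -/
open Finset

def g (k j : ℕ) (r : ℚ) : ℚ :=
  ∑ i ∈ range (j + 1), (-1 : ℚ) ^ (j - i) * (j.choose i : ℚ) * ((i : ℚ) + r) ^ k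

lemma neg_pow_sub {i j : ℕ} (h : i ≤ j) : (-1 : ℚ) ^ (j - i) = (-1) ^ j * (-1) ^ i := by
  have : (-1 : ℚ) ^ j = (-1) ^ (j - i) * (-1) ^ i := by
    rw [← pow_add, Nat.sub_add_cancel h]
  rw [this, mul_assoc, ← pow_add, ← two_mul, pow_mul]
  norm_num

lemma g_eq (k j : ℕ) (r : ℚ) :
    g k j r = (-1 : ℚ) ^ j * ∑ i ∈ range (j + 1), (-1 : ℚ) ^ i * (j.choose i : ℚ) * ((i : ℚ) + r) ^ k := by
  rw [g, mul_sum]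
  refine sum_congr rfl fun i hi => ?_
  rw [neg_pow_sub (Nat.lt_succ_iff.mp (mem_range.mp hi))]
  ring

lemma g_zero (k : ℕ) (r : ℚ) : g k 0 r = r ^ k := by
  simp [g]

lemma g_succ_succ (k j : ℕ) (r : ℚ) :
    g (k + 1) (j + 1) r = ((j : ℚ) + 1 + r) * g k (j + 1) r + ((j : ℚ) + 1) * g k j r := by
  rw [g_eq, g_eq, g_eq]
  have h1 : ∑ i ∈ range (j + 1), (-1 : ℚ) ^ i * (j.choose i : ℚ) * ((i : ℚ) + r) ^ k
      = ∑ i ∈ range (j + 2), (-1 : ℚ) ^ i * (j.choose i : ℚ) * ((i : ℚ) + r) ^ k := by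
    rw [sum_range_succ (n := j + 1)]
    simp [Nat.choose_succ_self]
  rw [h1, mul_sum, mul_sum, mul_sum, mul_sum, mul_sum, ← sum_add_distrib]
  refine sum_congr rfl fun i hi => ?_
  have hi' : i ≤ j + 1 := Nat.lt_succ_iff.mp (mem_range.mp hi)
  have key : ((j : ℚ) + 1 - i) * ((j + 1).choose i : ℚ) = ((j : ℚ) + 1) * (j.choose i : ℚ) := by
    have hn : ((j.choose i * (j + 1) : ℕ) : ℚ) = (((j + 1).choose i * (j + 1 - i) : ℕ) : ℚ) := by
      exact_mod_cast congrArg (Nat.cast : ℕ → ℚ) (Nat.choose_mul_succ_eq j i)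
    push_cast [Nat.cast_sub hi'] at hn
    push_cast
    linarith
  have key2 : ((i : ℚ) + r) ^ (k + 1) = ((i : ℚ) + r) ^ k * ((i : ℚ) + r) := pow_succ _ _
  rw [key2]
  have expand : (-1 : ℚ) ^ (j + 1) * ((-1 : ℚ) ^ i * ((j+1).choose i : ℚ) * (((i : ℚ) + r) ^ k * ((i:ℚ) + r)))
      = ((j:ℚ) + 1 + r) * ((-1:ℚ) ^ (j+1) * ((-1:ℚ)^i * ((j+1).choose i : ℚ) * ((i:ℚ)+r)^k))
        - (-1:ℚ)^(j+1) * (-1:ℚ)^i * (((j:ℚ)+1-i) * ((j+1).choose i :ℚ)) * ((i:ℚ)+r)^k := by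
    ring
  rw [expand, key]
  ring_nf

lemma g_vanish : ∀ k j : ℕ, ∀ r : ℚ, k < j → g k j r = 0 := by
  intro k
  induction k with
  | zero =>
    intro j r hj
    obtain ⟨j', rfl⟩ := Nat.exists_eq_add_of_lt hj
    simp only [Nat.zero_add]
    rw [g_eq]
    have h0 : ∑ i ∈ range (j' + 1 + 1), (-1 : ℚ) ^ i * ((j' + 1).choose i : ℚ) * ((i : ℚ) + r) ^ 0
        = ((∑ i ∈ range (j' + 1 + 1), (-1 : ℤ) ^ i * ((j' + 1).choose i : ℤ) : ℤ) : ℚ) := by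
      push_cast
      simp
    rw [h0, Int.alternating_sum_range_choose]
    simp
  | succ k ih =>
    intro j r hj
    obtain ⟨j', rfl⟩ := Nat.exists_eq_add_of_lt hj
    have e : k + 1 + j' + 1 = (k + j' + 1) + 1 := by omega
    rw [e, g_succ_succ, ih _ r (by omega), ih _ r (by omega)]
    ring

lemma gch_zero (x : ℚ) : gch x 0 = 1 := by simp [gch]

lemma gch_succ (x : ℚ) (j : ℕ) : ((j : ℚ) + 1) * gch x (j + 1) = (x - j) * gch x j := by
  have hf : ((j.factorial : ℚ)) ≠ 0 := Nat.cast_ne_zero.mpr j.factorial_ne_zero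
  have hf1 : (((j + 1).factorial : ℚ)) ≠ 0 := Nat.cast_ne_zero.mpr (j + 1).factorial_ne_zero
  rw [gch, gch, prod_range_succ, Nat.factorial_succ]
  push_cast
  field_simp

lemma newton (k : ℕ) (x r : ℚ) :
    (x + r) ^ k = ∑ j ∈ range (k + 1), gch x j * g k j r := by
  induction k with
  | zero => simp [gch_zero, g]
  | succ k ih =>
    set F : ℕ → ℚ := fun j => gch x j * ((j : ℚ) + r) * g k j r with hF
    rw [sum_range_succ' (fun j => gch x j * g (k + 1) j r) (k + 1)]
    have step : ∑ j ∈ range (k + 1), gch x (j + 1) * g (k + 1) (j + 1) r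
        = ∑ j ∈ range (k + 1), (F (j + 1) + (x - (j : ℚ)) * gch x j * g k j r) := by
      refine sum_congr rfl fun j _ => ?_
      rw [g_succ_succ]
      simp only [hF]
      push_cast
      linear_combination (g k j r) * gch_succ x j
    rw [step, sum_add_distrib]
    have hvan : F (k + 1) = 0 := by
      simp [hF, g_vanish k (k + 1) r (Nat.lt_succ_self k)]
    have h1 : ∑ j ∈ range (k + 1), F (j + 1) = ∑ j ∈ range (k + 1), F j - F 0 := by
      have e1 := sum_range_succ' F (k + 1)
      have e2 := sum_range_succ F (k + 1)
      rw [hvan, add_zero] at e2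
      rw [e2] at e1
      linarith
    rw [h1]
    have hF0 : F 0 = r ^ (k + 1) := by
      simp only [hF, gch_zero, g_zero, Nat.cast_zero, zero_add, pow_succ, one_mul]
      ring
    have hg0 : gch x 0 * g (k + 1) 0 r = r ^ (k + 1) := by
      rw [gch_zero, g_zero]; ring
    have comb : ∑ j ∈ range (k + 1), F j
        + ∑ j ∈ range (k + 1), (x - (j : ℚ)) * gch x j * g k j r = (x + r) ^ (k + 1) := by
      rw [← sum_add_distrib]
      have : ∀ j ∈ range (k + 1), F j + (x - (j : ℚ)) * gch x j * g k j r
          = (x + r) * (gch x j * g k j r) := fun j _ => by simp only [hF]; ring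
      rw [sum_congr rfl this, ← mul_sum, ← ih, pow_succ]
      ring
    rw [hF0, hg0]
    linarith

lemma gch_neg (a j : ℕ) : gch (-(a : ℚ) - 1) j = (-1 : ℚ) ^ j * (((a + j).choose j : ℕ) : ℚ) := by
  induction j with
  | zero => simp [gch_zero]
  | succ j ih =>
    have hj1 : ((j : ℚ) + 1) ≠ 0 := by positivity
    have h := gch_succ (-(a : ℚ) - 1) j
    rw [ih] at h
    have hn : (((a + j + 1) * (a + j).choose j : ℕ) : ℚ)
        = ((((a + j + 1).choose (j + 1)) * (j + 1) : ℕ) : ℚ) := by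
      exact_mod_cast congrArg (Nat.cast : ℕ → ℚ) (Nat.add_one_mul_choose_eq (a + j) j)
    push_cast at hn
    have goal' : ((j : ℚ) + 1) * gch (-(a : ℚ) - 1) (j + 1)
        = ((j : ℚ) + 1) * ((-1 : ℚ) ^ (j + 1) * (((a + j + 1).choose (j + 1) : ℕ) : ℚ)) := by
      rw [h]
      push_cast
      linear_combination (-(1 : ℚ)) ^ (j + 1) * hn
    exact mul_left_cancel₀ hj1 goal'

lemma hockey (n j : ℕ) :
    ∑ m ∈ range n, gch ((m : ℚ) - n) j = (-1 : ℚ) ^ j * (((n + j).choose (j + 1) : ℕ) : ℚ) := by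
  induction n with
  | zero => simp [Nat.choose_eq_zero_of_lt (Nat.lt_succ_self j)]
  | succ n ih =>
    rw [sum_range_succ' (fun m => gch ((m : ℚ) - (n + 1 : ℕ)) j) n]
    have h1 : ∑ m ∈ range n, gch (((m + 1 : ℕ) : ℚ) - ((n + 1 : ℕ) : ℚ)) j
        = ∑ m ∈ range n, gch ((m : ℚ) - n) j := by
      refine sum_congr rfl fun m _ => ?_
      congr 1
      push_cast
      ring
    have h0 : gch (((0 : ℕ) : ℚ) - ((n + 1 : ℕ) : ℚ)) j = (-1 : ℚ) ^ j * (((n + j).choose j : ℕ) : ℚ) := by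
      rw [show (((0 : ℕ) : ℚ) - ((n + 1 : ℕ) : ℚ)) = -(n : ℚ) - 1 by push_cast; ring]
      exact gch_neg n j
    rw [h1, h0, ih]
    have hp : ((n + 1 + j).choose (j + 1) : ℕ) = (n + j).choose j + (n + j).choose (j + 1) := by
      rw [show n + 1 + j = (n + j) + 1 by omega, Nat.choose_succ_succ]
    rw [hp]
    push_cast
    ring

theorem stmt7' (k n : ℕ) :
    (∑ i ∈ range n, ((i : ℚ) + 1) ^ k) = ∑ j ∈ range (k + 1),
      (-1 : ℚ) ^ j * (j.factorial : ℚ) * ((n + j).choose (j + 1) : ℚ)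
        * ((1 / (j.factorial : ℚ)) * ∑ i ∈ range (j + 1),
            (-1 : ℚ) ^ (j - i) * (j.choose i : ℚ) * ((i : ℚ) + ((n : ℚ) + 1)) ^ k) := by
  have e1 : ∀ m ∈ range n, ((m : ℚ) + 1) ^ k
      = ∑ j ∈ range (k + 1), gch ((m : ℚ) - n) j * g k j ((n : ℚ) + 1) := fun m _ => by
    have h := newton k ((m : ℚ) - n) ((n : ℚ) + 1)
    rw [show ((m : ℚ) - n) + ((n : ℚ) + 1) = (m : ℚ) + 1 by ring] at h
    exact h
  rw [sum_congr rfl e1, Finset.sum_comm]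
  refine sum_congr rfl fun j _ => ?_
  rw [← sum_mul, hockey n j]
  have hg : (∑ i ∈ range (j + 1),
      (-1 : ℚ) ^ (j - i) * (j.choose i : ℚ) * ((i : ℚ) + ((n : ℚ) + 1)) ^ k)
      = g k j ((n : ℚ) + 1) := rfl
  rw [hg]
  have hf : ((j.factorial : ℚ)) ≠ 0 := Nat.cast_ne_zero.mpr j.factorial_ne_zero
  field_simp

theorem stmt7 (k n : ℕ) :
    S k n = ∑ j ∈ range (k + 1),
      (-1 : ℚ) ^ j * (j.factorial : ℚ) * ((n + j).choose (j + 1) : ℚ) * rSt k j (n + 1) := by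
  simp only [S, rSt]
  exact stmt7' k n
end

section
/- For any non-negative integers k and n ≥ 1, S_k(n) = 1 + Σ_{j=0}^{k} j! · C(n-1, j+1) · {k,j}_2, where {k,j}_2 = (1/j!) Σ_{i=0}^{j} (-1)^{j-i} C(j,i) (i+2)^k. -/
open Finset

lemma vanish : ∀ k j : ℕ, k < j → (fwdDiff 1)^[j] (fun x : ℕ ↦ ((x:ℚ)+2)^k) = 0 := by
  intro k
  induction k using Nat.strong_induction_on with
  | _ k IH =>
    intro j hj
    obtain ⟨m, rfl⟩ := Nat.exists_eq_add_of_lt hj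
    rw [show k + m + 1 = (k + m) + 1 by ring, Function.iterate_add_apply]
    have hΔ : (fwdDiff 1)^[1] (fun x : ℕ ↦ ((x:ℚ)+2)^k)
        = fun x : ℕ ↦ ∑ i ∈ range k, (k.choose i : ℚ) * ((x:ℚ)+2)^i := by
      funext x
      simp only [Function.iterate_one, fwdDiff]
      push_cast
      have : ((x:ℚ) + 1 + 2) = ((x:ℚ)+2) + 1 := by ring
      rw [this, add_pow]
      simp [Finset.sum_range_succ, mul_comm]
    rw [hΔ]
    have : (fun x : ℕ ↦ ∑ i ∈ range k, (k.choose i : ℚ) * ((x:ℚ)+2)^i)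
        = ∑ i ∈ range k, (k.choose i : ℚ) • (fun x : ℕ ↦ ((x:ℚ)+2)^i) := by
      funext x; simp [smul_eq_mul]
    rw [this, fwdDiff_iter_finset_sum]
    refine Finset.sum_eq_zero fun i hi ↦ ?_
    rw [fwdDiff_iter_const_smul, IH i (mem_range.mp hi) (k+m) (le_trans (mem_range.mp hi) (Nat.le_add_right k m)), smul_zero]

lemma key_s8 (k t : ℕ) :
    ∑ j ∈ range (k+1), (t.choose j : ℚ) * ((fwdDiff 1)^[j] (fun x : ℕ ↦ ((x:ℚ)+2)^k) 0)
      = ((t:ℚ)+2)^k := by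
  have h := shift_eq_sum_fwdDiff_iter 1 (fun x : ℕ ↦ ((x:ℚ)+2)^k) t 0
  simp only [zero_add, smul_eq_mul, nsmul_eq_mul, Nat.cast_id, mul_one] at h
  rw [h]
  rcases le_total t k with htk | hkt
  · symm
    apply Finset.sum_subset
    · exact Finset.range_subset_range.mpr (by omega)
    · intro j hj hj'
      have : t < j := by simp at hj hj'; omega
      rw [Nat.choose_eq_zero_of_lt this]
      simp
  · apply Finset.sum_subset
    · exact Finset.range_subset_range.mpr (by omega)
    · intro j hj hj'
      have : k < j := by simp at hj hj'; omega
      rw [vanish k j this]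
      simp

lemma Dval (k j : ℕ) :
    (fwdDiff 1)^[j] (fun x : ℕ ↦ ((x:ℚ)+2)^k) 0 = (j.factorial : ℚ) * rSt k j 2 := by
  rw [fwdDiff_iter_eq_sum_shift, rSt]
  rw [← mul_assoc, mul_one_div, div_self (by positivity), one_mul]
  apply Finset.sum_congr rfl
  intro i hi
  rw [zsmul_eq_mul]
  push_cast
  ring_nf

theorem stmt8 (k n : ℕ) (hn : 1 ≤ n) :
    S k n = 1 + ∑ j ∈ range (k + 1),
      (j.factorial : ℚ) * ((n - 1).choose (j + 1) : ℚ) * rSt k j 2 := by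
  induction n with
  | zero => omega
  | succ n IH =>
    rcases Nat.eq_zero_or_pos n with rfl | hn1
    · simp [S]
    · rw [S, Finset.sum_range_succ, ← S, IH hn1]
      have hpascal : ∀ j : ℕ, ((n + 1 - 1).choose (j+1) : ℚ)
          = ((n - 1).choose (j+1) : ℚ) + ((n-1).choose j : ℚ) := by
        intro j
        have : n + 1 - 1 = (n - 1) + 1 := by omega
        rw [this, Nat.choose_succ_succ']
        push_cast; ring
      have hk := key_s8 k (n - 1)
      have : ((n - 1 : ℕ) : ℚ) + 2 = (n : ℚ) + 1 := by
        have : ((n - 1 : ℕ) : ℚ) = (n : ℚ) - 1 := by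
          rw [Nat.cast_sub hn1]; simp
        rw [this]; ring
      rw [this] at hk
      simp only [Dval] at hk
      simp only [hpascal]
      rw [← hk]
      rw [add_assoc, ← Finset.sum_add_distrib]
      congr 1
      apply Finset.sum_congr rfl
      intro j hj
      ring
end
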